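/- For every μ ∈ (0,1) and σ² > 0, the Simplex density integrates to one on the unit interval: ∫₀¹ (2πσ² [y(1−y)]³)^(−1/2) · exp(−d(y;μ)/(2σ²)) dy = 1. -/

import Mathlib

open MeasureTheory Real

/-- Unit deviance of the Simplex distribution. -/
noncomputable def simplexDev (y μ : ℝ) : ℝ :=
  (y - μ) ^ 2 / (y * (1 - y) * μ ^ 2 * (1 - μ) ^ 2)

/-- Density of the Simplex distribution. -/
noncomputable def simplexPdf (μ σ2 y : ℝ) : ℝ :=
  (2 * π * σ2 * (y * (1 - y)) ^ 3) ^ (-(1/2 : ℝ)) * Real.exp (-simplexDev y μ / (2 * σ2))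

/-!
Write the density as `w y * φ (r y)`, where `φ` is the `N(0, σ²)` density, `r` is the deviance
residual (so `d = r²`) and `w y = (y (1 - y)) ^ (-3/2)`. The involution `τ` of `(0,1)` that fixes
`μ` and preserves `d` reverses the sign of `r` and satisfies `w + |τ'| * (w ∘ τ) = 2 r'`. Averaging
the integral with its image under `τ` therefore turns it into `∫ r' * φ (r) = ∫_ℝ φ = 1`.
-/

open Set Filter Topology ProbabilityTheory
open scoped NNReal

theorem integral_add_abs_deriv_smul_comp_eq_two_smul {E : Type*} [NormedAddCommGroup E]
    [NormedSpace ℝ E] {s : Set ℝ} {τ τ' : ℝ → ℝ} {f : ℝ → E} (hs : MeasurableSet s)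
    (hτ' : ∀ x ∈ s, HasDerivWithinAt τ (τ' x) s x) (hτ : BijOn τ s s)
    (hf : IntegrableOn f s) :
    ∫ x in s, (f x + |τ' x| • f (τ x)) = (2 : ℝ) • ∫ x in s, f x := by
  have hchange := integral_image_eq_integral_abs_deriv_smul hs hτ' hτ.injOn f
  have hint := (integrableOn_image_iff_integrableOn_abs_deriv_smul hs hτ' hτ.injOn f).1
    (by rwa [hτ.image_eq])
  rw [hτ.image_eq] at hchange
  rw [integral_add hf hint, ← hchange, two_smul]

noncomputable def simplexResid (μ y : ℝ) : ℝ :=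
  (y - μ) / (μ * (1 - μ) * √(y * (1 - y)))

/-- In the odds coordinate `s = y / (1 - y)` this is `s ↦ m² / s` with `m = μ / (1 - μ)`. -/
noncomputable def simplexMirror (μ y : ℝ) : ℝ :=
  μ ^ 2 * (1 - y) / (y * (1 - μ) ^ 2 + μ ^ 2 * (1 - y))

section

variable {μ y σ2 : ℝ}

theorem simplexDev_eq_simplexResid_sq (hy : y ∈ Icc 0 1) :
    simplexDev y μ = simplexResid μ y ^ 2 := by
  have : 0 ≤ y * (1 - y) := mul_nonneg hy.1 (sub_nonneg.2 hy.2)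
  rw [simplexDev, simplexResid, div_pow, mul_pow, sq_sqrt this]
  ring

theorem simplexPdf_eq (hσ : 0 < σ2) (hy : y ∈ Ioo 0 1) :
    simplexPdf μ σ2 y =
      gaussianPDFReal 0 σ2.toNNReal (simplexResid μ y) / (y * (1 - y) * √(y * (1 - y))) := by
  have ha : 0 < y * (1 - y) := mul_pos hy.1 (sub_pos.2 hy.2)
  have hsqrt : √(2 * π * σ2 * (y * (1 - y)) ^ 3) =
      √(2 * π * σ2) * (y * (1 - y) * √(y * (1 - y))) := by
    rw [sqrt_mul' _ (pow_nonneg ha.le 3), pow_succ, sqrt_mul (sq_nonneg _), sqrt_sq ha.le]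
  rw [simplexPdf, gaussianPDFReal, Real.coe_toNNReal _ hσ.le, sub_zero,
    ← simplexDev_eq_simplexResid_sq (Ioo_subset_Icc_self hy), rpow_neg (by positivity),
    ← Real.sqrt_eq_rpow, hsqrt]
  field_simp

theorem one_sub_simplexMirror (hD : y * (1 - μ) ^ 2 + μ ^ 2 * (1 - y) ≠ 0) :
    1 - simplexMirror μ y = y * (1 - μ) ^ 2 / (y * (1 - μ) ^ 2 + μ ^ 2 * (1 - y)) := by
  rw [simplexMirror]; field_simp; ring

theorem simplexMirror_sub (hD : y * (1 - μ) ^ 2 + μ ^ 2 * (1 - y) ≠ 0) :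
    simplexMirror μ y - μ = μ * (1 - μ) * (μ - y) / (y * (1 - μ) ^ 2 + μ ^ 2 * (1 - y)) := by
  rw [simplexMirror]; field_simp; ring

theorem simplexMirror_den_pos (hμ : μ ≠ 0) (hy : y ∈ Ioo 0 1) :
    0 < y * (1 - μ) ^ 2 + μ ^ 2 * (1 - y) := by
  have := sub_pos.2 hy.2
  have := hy.1.le
  positivity

theorem simplexMirror_mem_Ioo (hμ : μ ∈ Ioo 0 1) (hy : y ∈ Ioo 0 1) :
    simplexMirror μ y ∈ Ioo 0 1 := by
  have hD := simplexMirror_den_pos hμ.1.ne' hy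
  have h1y := sub_pos.2 hy.2
  have h1μ := sub_pos.2 hμ.2
  refine ⟨div_pos (mul_pos (pow_pos hμ.1 2) h1y) hD, sub_pos.1 ?_⟩
  rw [one_sub_simplexMirror hD.ne']
  exact div_pos (mul_pos hy.1 (pow_pos h1μ 2)) hD

theorem simplexMirror_simplexMirror (hμ : μ ∈ Ioo 0 1) (hy : y ∈ Ioo 0 1) :
    simplexMirror μ (simplexMirror μ y) = y := by
  have hD := (simplexMirror_den_pos hμ.1.ne' hy).ne'
  have h1μ := (sub_pos.2 hμ.2).ne'
  have := hμ.1.ne'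
  rw [simplexMirror, one_sub_simplexMirror hD, simplexMirror]
  field_simp
  ring

theorem bijOn_simplexMirror (hμ : μ ∈ Ioo 0 1) :
    BijOn (simplexMirror μ) (Ioo 0 1) (Ioo 0 1) :=
  have hinv : LeftInvOn (simplexMirror μ) (simplexMirror μ) (Ioo 0 1) :=
    fun _ hy ↦ simplexMirror_simplexMirror hμ hy
  have hmaps : MapsTo (simplexMirror μ) (Ioo 0 1) (Ioo 0 1) :=
    fun _ hy ↦ simplexMirror_mem_Ioo hμ hy
  InvOn.bijOn ⟨hinv, hinv⟩ hmaps hmaps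

theorem hasDerivAt_simplexMirror (hμ : μ ≠ 0) (hy : y ∈ Ioo 0 1) :
    HasDerivAt (simplexMirror μ)
      (-(μ * (1 - μ)) ^ 2 / (y * (1 - μ) ^ 2 + μ ^ 2 * (1 - y)) ^ 2) y := by
  have hD := (simplexMirror_den_pos hμ hy).ne'
  have hnum : HasDerivAt (fun x ↦ μ ^ 2 * (1 - x)) (-μ ^ 2) y :=
    (((hasDerivAt_id' y).const_sub 1).const_mul (μ ^ 2)).congr_deriv (by ring)
  have hden :
      HasDerivAt (fun x ↦ x * (1 - μ) ^ 2 + μ ^ 2 * (1 - x)) ((1 - μ) ^ 2 - μ ^ 2) y :=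
    (((hasDerivAt_id' y).mul_const _).add
      (((hasDerivAt_id' y).const_sub 1).const_mul _)).congr_deriv (by ring)
  exact (hnum.div hden hD).congr_deriv (by field_simp; ring)

theorem simplexMirror_mul_one_sub (hμ : μ ≠ 0) (hy : y ∈ Ioo 0 1) :
    simplexMirror μ y * (1 - simplexMirror μ y) =
      (μ * (1 - μ)) ^ 2 * (y * (1 - y)) / (y * (1 - μ) ^ 2 + μ ^ 2 * (1 - y)) ^ 2 := by
  have hD := (simplexMirror_den_pos hμ hy).ne'
  rw [one_sub_simplexMirror hD, simplexMirror]
  field_simp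

theorem sqrt_simplexMirror_mul_one_sub (hμ : μ ∈ Ioo 0 1) (hy : y ∈ Ioo 0 1) :
    √(simplexMirror μ y * (1 - simplexMirror μ y)) =
      μ * (1 - μ) * √(y * (1 - y)) / (y * (1 - μ) ^ 2 + μ ^ 2 * (1 - y)) := by
  have hD := simplexMirror_den_pos hμ.1.ne' hy
  have hk : 0 < μ * (1 - μ) := mul_pos hμ.1 (sub_pos.2 hμ.2)
  rw [simplexMirror_mul_one_sub hμ.1.ne' hy, sqrt_div' _ (sq_nonneg _), sqrt_sq hD.le,
    sqrt_mul' _ (mul_pos hy.1 (sub_pos.2 hy.2)).le, sqrt_sq hk.le]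

theorem simplexResid_simplexMirror (hμ : μ ∈ Ioo 0 1) (hy : y ∈ Ioo 0 1) :
    simplexResid μ (simplexMirror μ y) = -simplexResid μ y := by
  have hD := (simplexMirror_den_pos hμ.1.ne' hy).ne'
  have hμ0 := hμ.1.ne'
  have hμ1 := (sub_pos.2 hμ.2).ne'
  have ha := (sqrt_pos.2 (mul_pos hy.1 (sub_pos.2 hy.2))).ne'
  rw [simplexResid, simplexMirror_sub hD, sqrt_simplexMirror_mul_one_sub hμ hy, simplexResid]
  generalize y * (1 - μ) ^ 2 + μ ^ 2 * (1 - y) = D at hD ⊢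
  field_simp
  ring

theorem hasDerivAt_simplexResid (hμ : μ ∈ Ioo 0 1) (hy : y ∈ Ioo 0 1) :
    HasDerivAt (simplexResid μ)
      ((y * (1 - μ) + μ * (1 - y)) / (2 * μ * (1 - μ) * (y * (1 - y) * √(y * (1 - y))))) y := by
  have ha : 0 < y * (1 - y) := mul_pos hy.1 (sub_pos.2 hy.2)
  have hs : 0 < √(y * (1 - y)) := sqrt_pos.2 ha
  have hμ0 := hμ.1.ne'
  have hμ1 := (sub_pos.2 hμ.2).ne'
  have hprod : HasDerivAt (fun x ↦ x * (1 - x)) (1 - 2 * y) y :=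
    ((hasDerivAt_id' y).mul ((hasDerivAt_id' y).const_sub 1)).congr_deriv (by ring)
  refine (((hasDerivAt_id' y).sub_const μ).div ((hprod.sqrt ha.ne').const_mul (μ * (1 - μ)))
    (by positivity)).congr_deriv ?_
  have hs2 := sq_sqrt ha.le
  generalize √(y * (1 - y)) = s at hs hs2 ⊢
  field_simp
  rw [hs2, mul_div_cancel_left₀ _ ha.ne']
  ring

theorem deriv_simplexResid_pos (hμ : μ ∈ Ioo 0 1) (hy : y ∈ Ioo 0 1) :
    0 < deriv (simplexResid μ) y := by
  have h1μ := sub_pos.2 hμ.2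
  have h1y := sub_pos.2 hy.2
  have ha := mul_pos hy.1 h1y
  rw [(hasDerivAt_simplexResid hμ hy).deriv]
  exact div_pos (add_pos (mul_pos hy.1 h1μ) (mul_pos hμ.1 h1y))
    (mul_pos (mul_pos (mul_pos two_pos hμ.1) h1μ) (mul_pos ha (sqrt_pos.2 ha)))

theorem strictMonoOn_simplexResid (hμ : μ ∈ Ioo 0 1) :
    StrictMonoOn (simplexResid μ) (Ioo 0 1) :=
  strictMonoOn_of_deriv_pos (convex_Ioo 0 1)
    (fun _ hy ↦ (hasDerivAt_simplexResid hμ hy).continuousAt.continuousWithinAt)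
    (fun _ hy ↦ deriv_simplexResid_pos hμ (interior_subset hy))

theorem simplexResid_eq_mul_inv_sqrt (μ : ℝ) :
    simplexResid μ = fun y ↦ (y - μ) / (μ * (1 - μ)) * (√(y * (1 - y)))⁻¹ := by
  funext y
  rw [simplexResid, div_eq_mul_inv, div_eq_mul_inv, mul_inv, mul_assoc]

theorem tendsto_simplexResid_nhdsGT_zero (hμ : μ ∈ Ioo 0 1) :
    Tendsto (simplexResid μ) (𝓝[>] 0) atBot := by
  have hk : 0 < μ * (1 - μ) := mul_pos hμ.1 (sub_pos.2 hμ.2)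
  have hsqrt : Tendsto (fun y : ℝ ↦ √(y * (1 - y))) (𝓝[>] 0) (𝓝[>] 0) := by
    refine tendsto_nhdsWithin_iff.2 ⟨?_, ?_⟩
    · exact tendsto_nhdsWithin_of_tendsto_nhds (by simpa using (by fun_prop :
        Continuous fun y : ℝ ↦ √(y * (1 - y))).tendsto 0)
    · filter_upwards [Ioo_mem_nhdsGT one_pos] with y hy
      exact sqrt_pos.2 (mul_pos hy.1 (sub_pos.2 hy.2))
  rw [simplexResid_eq_mul_inv_sqrt]
  refine Tendsto.neg_mul_atTop (C := -μ / (μ * (1 - μ)))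
    (div_neg_of_neg_of_pos (neg_lt_zero.2 hμ.1) hk) ?_ (tendsto_inv_nhdsGT_zero.comp hsqrt)
  exact tendsto_nhdsWithin_of_tendsto_nhds (by simpa using (by fun_prop :
    Continuous fun y : ℝ ↦ (y - μ) / (μ * (1 - μ))).tendsto 0)

theorem tendsto_simplexResid_nhdsLT_one (hμ : μ ∈ Ioo 0 1) :
    Tendsto (simplexResid μ) (𝓝[<] 1) atTop := by
  have hk : 0 < μ * (1 - μ) := mul_pos hμ.1 (sub_pos.2 hμ.2)
  have hsqrt : Tendsto (fun y : ℝ ↦ √(y * (1 - y))) (𝓝[<] 1) (𝓝[>] 0) := by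
    refine tendsto_nhdsWithin_iff.2 ⟨?_, ?_⟩
    · exact tendsto_nhdsWithin_of_tendsto_nhds (by simpa using (by fun_prop :
        Continuous fun y : ℝ ↦ √(y * (1 - y))).tendsto 1)
    · filter_upwards [Ioo_mem_nhdsLT one_pos] with y hy
      exact sqrt_pos.2 (mul_pos hy.1 (sub_pos.2 hy.2))
  rw [simplexResid_eq_mul_inv_sqrt]
  refine Tendsto.pos_mul_atTop (C := (1 - μ) / (μ * (1 - μ)))
    (div_pos (sub_pos.2 hμ.2) hk) ?_ (tendsto_inv_nhdsGT_zero.comp hsqrt)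
  exact tendsto_nhdsWithin_of_tendsto_nhds ((by fun_prop :
    Continuous fun y : ℝ ↦ (y - μ) / (μ * (1 - μ))).tendsto 1)

theorem image_simplexResid (hμ : μ ∈ Ioo 0 1) : simplexResid μ '' Ioo 0 1 = univ := by
  refine eq_univ_of_univ_subset (ContinuousOn.surjOn_of_tendsto (nonempty_Ioo.2 one_pos)
    (fun _ hy ↦ (hasDerivAt_simplexResid hμ hy).continuousAt.continuousWithinAt) ?_ ?_)
  · exact (tendsto_comp_coe_Ioo_atBot one_pos).2 (tendsto_simplexResid_nhdsGT_zero hμ)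
  · exact (tendsto_comp_coe_Ioo_atTop one_pos).2 (tendsto_simplexResid_nhdsLT_one hμ)

theorem simplexPdf_add_abs_deriv_mul_simplexPdf_simplexMirror (hμ : μ ∈ Ioo 0 1)
    (hσ : 0 < σ2) (hy : y ∈ Ioo 0 1) :
    simplexPdf μ σ2 y + |deriv (simplexMirror μ) y| * simplexPdf μ σ2 (simplexMirror μ y) =
      2 * (deriv (simplexResid μ) y * gaussianPDFReal 0 σ2.toNNReal (simplexResid μ y)) := by
  have hD := simplexMirror_den_pos hμ.1.ne' hy
  have hμ0 := hμ.1.ne'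
  have hμ1 := (sub_pos.2 hμ.2).ne'
  have hy0 := hy.1.ne'
  have hy1 := (sub_pos.2 hy.2).ne'
  have hs := (sqrt_pos.2 (mul_pos hy.1 (sub_pos.2 hy.2))).ne'
  have hneg : gaussianPDFReal 0 σ2.toNNReal (-simplexResid μ y) =
      gaussianPDFReal 0 σ2.toNNReal (simplexResid μ y) := by
    simp only [gaussianPDFReal, sub_zero, neg_sq]
  rw [simplexPdf_eq hσ hy, simplexPdf_eq hσ (simplexMirror_mem_Ioo hμ hy),
    simplexResid_simplexMirror hμ hy, hneg, (hasDerivAt_simplexMirror hμ0 hy).deriv,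
    (hasDerivAt_simplexResid hμ hy).deriv, sqrt_simplexMirror_mul_one_sub hμ hy,
    simplexMirror_mul_one_sub hμ0 hy, neg_div, abs_neg, abs_of_nonneg (by positivity)]
  generalize √(y * (1 - y)) = s at hs ⊢
  field_simp
  ring

theorem simplexPdf_nonneg (hσ : 0 < σ2) (hy : y ∈ Ioo 0 1) : 0 ≤ simplexPdf μ σ2 y := by
  have ha := mul_pos hy.1 (sub_pos.2 hy.2)
  rw [simplexPdf_eq hσ hy]
  exact div_nonneg (gaussianPDFReal_nonneg _ _ _) (by positivity)

theorem measurable_simplexPdf (μ σ2 : ℝ) : Measurable (simplexPdf μ σ2) := by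
  unfold simplexPdf simplexDev
  fun_prop

theorem integrableOn_deriv_simplexResid_mul_gaussianPDFReal (hμ : μ ∈ Ioo 0 1) (v : ℝ≥0) :
    IntegrableOn (fun y ↦ deriv (simplexResid μ) y * gaussianPDFReal 0 v (simplexResid μ y))
      (Ioo 0 1) := by
  have h := (integrableOn_image_iff_integrableOn_abs_deriv_smul measurableSet_Ioo
    (fun y hy ↦ (hasDerivAt_simplexResid hμ hy).differentiableAt.hasDerivAt.hasDerivWithinAt)
    (strictMonoOn_simplexResid hμ).injOn (gaussianPDFReal 0 v)).1
    (by rw [image_simplexResid hμ]; exact (integrable_gaussianPDFReal 0 v).integrableOn)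
  refine h.congr_fun (fun y hy ↦ ?_) measurableSet_Ioo
  dsimp only
  rw [smul_eq_mul, abs_of_pos (deriv_simplexResid_pos hμ hy)]

theorem integral_deriv_simplexResid_mul_gaussianPDFReal (hμ : μ ∈ Ioo 0 1) {v : ℝ≥0}
    (hv : v ≠ 0) :
    ∫ y in Ioo 0 1, deriv (simplexResid μ) y * gaussianPDFReal 0 v (simplexResid μ y) = 1 := by
  have h := integral_image_eq_integral_abs_deriv_smul measurableSet_Ioo
    (fun y hy ↦ (hasDerivAt_simplexResid hμ hy).differentiableAt.hasDerivAt.hasDerivWithinAt)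
    (strictMonoOn_simplexResid hμ).injOn (gaussianPDFReal 0 v)
  rw [image_simplexResid hμ, Measure.restrict_univ, integral_gaussianPDFReal_eq_one 0 hv] at h
  refine (setIntegral_congr_fun measurableSet_Ioo fun y hy ↦ ?_).trans h.symm
  rw [smul_eq_mul, abs_of_pos (deriv_simplexResid_pos hμ hy)]

theorem integrableOn_simplexPdf (hμ : μ ∈ Ioo 0 1) (hσ : 0 < σ2) :
    IntegrableOn (simplexPdf μ σ2) (Ioo 0 1) := by
  refine Integrable.mono'
    ((integrableOn_deriv_simplexResid_mul_gaussianPDFReal hμ σ2.toNNReal).const_mul 2)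
    (measurable_simplexPdf μ σ2).aestronglyMeasurable ?_
  filter_upwards [self_mem_ae_restrict measurableSet_Ioo] with y hy
  rw [norm_of_nonneg (simplexPdf_nonneg hσ hy),
    ← simplexPdf_add_abs_deriv_mul_simplexPdf_simplexMirror hμ hσ hy, le_add_iff_nonneg_right]
  exact mul_nonneg (abs_nonneg _) (simplexPdf_nonneg hσ (simplexMirror_mem_Ioo hμ hy))

end

theorem simplexPdf_integral_eq_one (μ σ2 : ℝ) (hμ : μ ∈ Set.Ioo (0:ℝ) 1) (hσ : 0 < σ2) :
    ∫ y in Set.Ioo (0:ℝ) 1, simplexPdf μ σ2 y = 1 := by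
  have hsym := integral_add_abs_deriv_smul_comp_eq_two_smul measurableSet_Ioo
    (fun y hy ↦
      (hasDerivAt_simplexMirror hμ.1.ne' hy).differentiableAt.hasDerivAt.hasDerivWithinAt)
    (bijOn_simplexMirror hμ) (integrableOn_simplexPdf hμ hσ)
  simp only [smul_eq_mul] at hsym
  rw [setIntegral_congr_fun measurableSet_Ioo
      (fun y hy ↦ simplexPdf_add_abs_deriv_mul_simplexPdf_simplexMirror hμ hσ hy),
    integral_const_mul, integral_deriv_simplexResid_mul_gaussianPDFReal hμ (by simpa using hσ)]
    at hsym
  linarith
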